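/- Let α > 0, x ∈ ℝ, t > 0 with x/t ≥ 1/(12α). For every real l ≤ 0 and k = −2/3 + l·e^{iπ/6} one has Re(Φ(k) − Φ(−2/3)) = −l³/(64α²) − (l/(8α))·(x/t − 1/(12α)), and consequently Re(Φ(k) − Φ(−2/3)) ≥ |k + 2/3|³/(64α²) ≥ 0 and exp(−(3/4)·t·Re(Φ(k) − Φ(−2/3))) ≤ exp(−2|z|³), where z = (1/8)·(3/α²)^{1/3}·(k + 2/3)·t^{1/3}. -/

import Mathlib

open Complex

/-- The phase function Φ(k) = (i/(4α))·[(x/t)·k + (1/(16α))·(k³ + 2k²)]. -/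
noncomputable def Phi (α x t : ℝ) (k : ℂ) : ℂ :=
  (Complex.I / (4 * (α : ℂ))) *
    (((x / t : ℝ) : ℂ) * k + (1 / (16 * (α : ℂ))) * (k ^ 3 + 2 * k ^ 2))

lemma exp_I_mul_pi_div_six_pow_three : exp (I * (Real.pi / 6)) ^ 3 = I := by
  rw [← exp_nat_mul, show ((3 : ℕ) : ℂ) * (I * (Real.pi / 6)) = (Real.pi / 2 : ℝ) * I by
    push_cast; ring, exp_mul_I]
  simp

lemma exp_I_mul_pi_div_six_im : (exp (I * (Real.pi / 6))).im = 1 / 2 := by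
  rw [show I * (Real.pi / 6) = (Real.pi / 6 : ℝ) * I by push_cast; ring,
    exp_ofReal_mul_I_im, Real.sin_pi_div_six]

lemma norm_exp_I_mul_pi_div_six : ‖exp (I * (Real.pi / 6))‖ = 1 := by
  rw [mul_comm]
  exact_mod_cast norm_exp_ofReal_mul_I (Real.pi / 6)

/-- `-2/3` is a degenerate critical point of `Φ` when `x/t = 1/(12α)`, so the difference is a
linear term plus a pure cubic, which `e³ = i` makes real. -/
lemma Phi_add_mul_sub_Phi (α x t l : ℝ) (hα : α ≠ 0) {e : ℂ} (he : e ^ 3 = I) :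
    Phi α x t (-2/3 + l * e) - Phi α x t (-2/3) =
      ((x / t - 1 / (12 * α)) * l / (4 * α) : ℝ) * (I * e) + (-l ^ 3 / (64 * α ^ 2) : ℝ) := by
  have hα' : (α : ℂ) ≠ 0 := by exact_mod_cast hα
  simp only [Phi]
  push_cast
  field_simp
  linear_combination (↑l ^ 3 * I * 20736) * he + (↑l ^ 3 * 20736) * I_sq

lemma re_Phi_add_mul_sub_Phi (α x t l : ℝ) (hα : α ≠ 0) {e : ℂ} (he : e ^ 3 = I)
    (he_im : e.im = 1 / 2) :
    (Phi α x t (-2/3 + l * e) - Phi α x t (-2/3)).re =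
      -l ^ 3 / (64 * α ^ 2) - (l / (8 * α)) * (x / t - 1 / (12 * α)) := by
  rw [Phi_add_mul_sub_Phi α x t l hα he]
  simp only [add_re, mul_re, mul_im, ofReal_re, ofReal_im, I_re, I_im, he_im]
  ring

lemma mul_rpow_one_third_mul_rpow_one_third_pow_three (c : ℝ) {a b : ℝ} (ha : 0 ≤ a)
    (hb : 0 ≤ b) : (c * a ^ ((1 : ℝ) / 3) * b ^ ((1 : ℝ) / 3)) ^ 3 = c ^ 3 * a * b := by
  have h : ∀ y : ℝ, 0 ≤ y → (y ^ ((1 : ℝ) / 3)) ^ 3 = y := fun y hy => by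
    simpa using Real.rpow_inv_natCast_pow hy (n := 3) (by norm_num)
  rw [mul_pow, mul_pow, h a ha, h b hb]

section RealBounds

variable {α c l : ℝ}

lemma cube_div_le_of_nonpos (hα : 0 < α) (hc : 0 ≤ c) (hl : l ≤ 0) :
    (-l) ^ 3 / (64 * α ^ 2) ≤ -l ^ 3 / (64 * α ^ 2) - (l / (8 * α)) * c := by
  have : 0 ≤ -l * c / (8 * α) := div_nonneg (mul_nonneg (neg_nonneg.2 hl) hc) (by positivity)
  linarith [show -l ^ 3 / (64 * α ^ 2) - l / (8 * α) * c - (-l) ^ 3 / (64 * α ^ 2)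
    = -l * c / (8 * α) by ring]

/-- The scaling `z = s (k + 2/3)` with `s³ = 3t/(512α²)` turns the cubic term of
`-(3/4) t Re(Φ(k) - Φ(-2/3))` into exactly `-2|z|³`. -/
lemma neg_mul_le_neg_two_mul_pow_three {t s : ℝ} (hα : 0 < α) (ht : 0 ≤ t) (hc : 0 ≤ c)
    (hl : l ≤ 0) (hs : s ^ 3 = 3 / α ^ 2 * t / 512) :
    -(3/4) * t * (-l ^ 3 / (64 * α ^ 2) - (l / (8 * α)) * c) ≤ -2 * (s * -l) ^ 3 := by
  have hα' : α ≠ 0 := hα.ne'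
  have hsplit : -(3/4) * t * (-l ^ 3 / (64 * α ^ 2) - (l / (8 * α)) * c) =
      -2 * (s * -l) ^ 3 + 3 / 32 * (t * l * c / α) := by
    rw [mul_pow, hs]
    field_simp
    ring
  have : t * l * c / α ≤ 0 :=
    div_nonpos_of_nonpos_of_nonneg
      (mul_nonpos_of_nonpos_of_nonneg (mul_nonpos_of_nonneg_of_nonpos ht hl) hc) hα.le
  linarith

end RealBounds

theorem stmt_5 (α x t : ℝ) (hα : 0 < α) (ht : 0 < t) (hxt : 1 / (12 * α) ≤ x / t)
    (l : ℝ) (hl : l ≤ 0) (k : ℂ)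
    (hk : k = -2/3 + (l : ℂ) * Complex.exp (Complex.I * (Real.pi / 6))) :
    (Phi α x t k - Phi α x t (-2/3)).re =
        -l ^ 3 / (64 * α ^ 2) - (l / (8 * α)) * (x / t - 1 / (12 * α)) ∧
      (Phi α x t k - Phi α x t (-2/3)).re ≥ ‖k + 2/3‖ ^ 3 / (64 * α ^ 2) ∧
      ‖k + 2/3‖ ^ 3 / (64 * α ^ 2) ≥ 0 ∧
      Real.exp (-(3/4) * t * (Phi α x t k - Phi α x t (-2/3)).re) ≤
        Real.exp (-2 * ‖
          ((((1:ℝ)/8 * (3 / α ^ 2) ^ ((1:ℝ)/3) * t ^ ((1:ℝ)/3) : ℝ) : ℂ) * (k + 2/3))‖ ^ 3) := by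
  have hc : 0 ≤ x / t - 1 / (12 * α) := sub_nonneg.2 hxt
  have hre := re_Phi_add_mul_sub_Phi α x t l hα.ne' exp_I_mul_pi_div_six_pow_three
    exp_I_mul_pi_div_six_im
  rw [← hk] at hre
  have hnorm : ‖k + 2/3‖ = -l := by
    rw [hk, add_comm, ← add_assoc, show (2/3 : ℂ) + -2/3 = 0 by ring, zero_add, norm_mul,
      norm_exp_I_mul_pi_div_six, mul_one, norm_real, Real.norm_eq_abs, abs_of_nonpos hl]
  set s : ℝ := 1 / 8 * (3 / α ^ 2) ^ ((1:ℝ)/3) * t ^ ((1:ℝ)/3)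
  have hs : 0 ≤ s := by positivity
  have hs3 : s ^ 3 = 3 / α ^ 2 * t / 512 := by
    rw [mul_rpow_one_third_mul_rpow_one_third_pow_three _ (by positivity) ht.le]
    ring
  refine ⟨hre, ?_, by positivity, ?_⟩
  · rw [hre, hnorm]
    exact cube_div_le_of_nonpos hα hc hl
  · rw [norm_mul, norm_real, Real.norm_eq_abs, abs_of_nonneg hs, hnorm, hre]
    exact Real.exp_le_exp.2 (neg_mul_le_neg_two_mul_pow_three hα ht.le hc hl hs3)
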